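/- arXiv:2504.15542 — 4 statements merged into one kernel-verified Lean document; each statement's English description precedes it below -/
import Mathlib

section
/- Let V be a finite-dimensional real inner product space, let C ⊆ V be a closed convex cone (a closed convex set containing 0 and stable under multiplication by nonnegative scalars), and let K = {ν ∈ V : ⟨c, ν⟩ ≤ 0 for all c ∈ C} be its polar cone. Let S, T ⊆ V be nonempty finite sets such that for every ν ∈ K one has max_{s ∈ S} ⟨s, ν⟩ = max_{t ∈ T} ⟨t, ν⟩. Then the convex hulls of the Minkowski sums coincide: convexHull ℝ (S + C) = convexHull ℝ (T + C). -/
open scoped Pointwise RealInnerProductSpace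

/-!
Since `C` is convex, `convexHull (S + C) = convexHull S + C`, a closed convex set. If a point of
`convexHull T + C` lay outside it, a separating vector `ν` would be bounded above on `S + C`;
as `C` is a cone this forces `ν` into the polar cone of `C`. There `⟪·, ν⟫` is at most
`max_{t ∈ T} ⟪t, ν⟫ = max_{s ∈ S} ⟪s, ν⟫` on `convexHull T + C`, contradicting the separation.
-/

section

variable {V : Type*} [NormedAddCommGroup V] [InnerProductSpace ℝ V]

theorem exists_inner_lt_of_notMem [CompleteSpace V] {s : Set V} {x : V} (hconv : Convex ℝ s)
    (hclosed : IsClosed s) (hx : x ∉ s) :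
    ∃ (ν : V) (u : ℝ), (∀ a ∈ s, ⟪a, ν⟫ < u) ∧ u < ⟪x, ν⟫ := by
  obtain ⟨f, u, hs, hxu⟩ := geometric_hahn_banach_closed_point hconv hclosed hx
  have hf : ∀ y, f y = ⟪y, (InnerProductSpace.toDual ℝ V).symm f⟫ := fun y => by
    rw [real_inner_comm, InnerProductSpace.toDual_symm_apply]
  exact ⟨_, u, fun a ha => hf a ▸ hs a ha, hf x ▸ hxu⟩

theorem inner_nonpos_of_forall_inner_add_lt {s C : Set V} {ν : V} {u : ℝ} (hs : s.Nonempty)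
    (hCcone : ∀ c ∈ C, ∀ r : ℝ, 0 ≤ r → r • c ∈ C) (hlt : ∀ a ∈ s + C, ⟪a, ν⟫ < u) :
    ∀ c ∈ C, ⟪c, ν⟫ ≤ 0 := by
  intro c hc
  by_contra! hpos
  obtain ⟨a, ha⟩ := hs
  set r := |u - ⟪a, ν⟫| / ⟪c, ν⟫
  have hr : r * ⟪c, ν⟫ = |u - ⟪a, ν⟫| := div_mul_cancel₀ _ hpos.ne'
  have := hlt _ (Set.add_mem_add ha (hCcone c hc r (by positivity)))
  rw [inner_add_left, real_inner_smul_left, hr] at this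
  linarith [le_abs_self (u - ⟪a, ν⟫)]

theorem inner_le_sup'_of_mem_convexHull_add {T : Finset V} (hT : T.Nonempty) {C : Set V} {ν : V}
    (hν : ∀ c ∈ C, ⟪c, ν⟫ ≤ 0) {x : V} (hx : x ∈ convexHull ℝ (T : Set V) + C) :
    ⟪x, ν⟫ ≤ T.sup' hT (⟪·, ν⟫) := by
  obtain ⟨y, hy, c, hc, rfl⟩ := hx
  have hyT : ⟪y, ν⟫ ≤ T.sup' hT (⟪·, ν⟫) :=
    ((innerₗ V).flip ν).convexOn convex_univ |>.le_sup_of_mem_convexHull (Set.subset_univ _) hy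
  rw [inner_add_left]
  linarith [hν c hc]

theorem convexHull_add_subset_of_sup'_le [CompleteSpace V] {C : Set V} (hCclosed : IsClosed C)
    (hCconv : Convex ℝ C) (hC0 : (0 : V) ∈ C) (hCcone : ∀ c ∈ C, ∀ r : ℝ, 0 ≤ r → r • c ∈ C)
    {S T : Finset V} (hS : S.Nonempty) (hT : T.Nonempty)
    (hle : ∀ ν : V, (∀ c ∈ C, ⟪c, ν⟫ ≤ 0) → T.sup' hT (⟪·, ν⟫) ≤ S.sup' hS (⟪·, ν⟫)) :
    convexHull ℝ ((T : Set V) + C) ⊆ convexHull ℝ ((S : Set V) + C) := by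
  simp only [convexHull_add, hCconv.convexHull_eq]
  intro x hx
  by_contra hxS
  obtain ⟨ν, u, hsep, hux⟩ := exists_inner_lt_of_notMem ((convex_convexHull ℝ _).add hCconv)
    (hCclosed.add_left_of_isCompact (S.finite_toSet.isCompact_convexHull ℝ)) hxS
  have hν : ∀ c ∈ C, ⟪c, ν⟫ ≤ 0 := inner_nonpos_of_forall_inner_add_lt
    (convexHull_nonempty_iff.2 (Finset.coe_nonempty.2 hS)) hCcone hsep
  have hSu : S.sup' hS (⟪·, ν⟫) < u := (Finset.sup'_lt_iff hS).2 fun s hs =>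
    by simpa using hsep (s + 0) (Set.add_mem_add (subset_convexHull ℝ _ hs) hC0)
  linarith [inner_le_sup'_of_mem_convexHull_add hT hν hx, hle ν hν]

end

/-- Let `V` be a finite-dimensional real inner product space,
`C ⊆ V` a closed convex cone, and `K = {ν : ∀ c ∈ C, ⟪c, ν⟫ ≤ 0}` its polar cone.
If `S, T` are nonempty finite subsets of `V` such that for every `ν ∈ K` one has
`max_{s ∈ S} ⟪s, ν⟫ = max_{t ∈ T} ⟪t, ν⟫`, then
`convexHull ℝ (S + C) = convexHull ℝ (T + C)`. -/
theorem stmt4 {V : Type*} [NormedAddCommGroup V] [InnerProductSpace ℝ V]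
    [FiniteDimensional ℝ V]
    (C : Set V) (hCclosed : IsClosed C) (hCconv : Convex ℝ C) (hC0 : (0 : V) ∈ C)
    (hCcone : ∀ c ∈ C, ∀ r : ℝ, 0 ≤ r → r • c ∈ C)
    (S T : Finset V) (hS : S.Nonempty) (hT : T.Nonempty)
    (hmax : ∀ ν : V, (∀ c ∈ C, ⟪c, ν⟫ ≤ 0) →
      S.sup' hS (fun s => ⟪s, ν⟫) = T.sup' hT (fun t => ⟪t, ν⟫)) :
    convexHull ℝ ((S : Set V) + C) = convexHull ℝ ((T : Set V) + C) :=
  (convexHull_add_subset_of_sup'_le hCclosed hCconv hC0 hCcone hT hS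
      fun ν hν => (hmax ν hν).le).antisymm
    (convexHull_add_subset_of_sup'_le hCclosed hCconv hC0 hCcone hS hT
      fun ν hν => (hmax ν hν).ge)
end

section
/- Let V be a finite-dimensional real inner product space and let C ⊆ V be a closed convex cone (a closed convex set containing 0 and stable under multiplication by nonnegative scalars) that is pointed, i.e. C ∩ (−C) = {0}. Let Γ be a finite group acting on V by linear automorphisms, and for μ ∈ V write Γμ = {σ·μ : σ ∈ Γ} for its orbit. If μ, μ′ ∈ V satisfy convexHull ℝ (Γμ + C) = convexHull ℝ (Γμ′ + C), then μ and μ′ lie in the same Γ-orbit, i.e. Γμ = Γμ′. -/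
/-!
Since `C` is convex, `convexHull ℝ (Γμ + C) = convexHull ℝ (Γμ) + C`. An extreme point of
`K + C`, for a cone `C`, cannot be written `x + c` with `c ≠ 0` (it would be the midpoint of `x`
and `x + 2c`), so it is an extreme point of `K`; for `K = convexHull ℝ (Γμ)` it lies in `Γμ`.
Hence it suffices that the common hull has an extreme point: it then lies in both orbits.

Such an extreme point exists because `C` is pointed. If `C ≠ {0}`, separating `-c₀` from `C`
for some `c₀ ∈ C \ {0}` gives a functional `g ≤ 0` on `C` with `g c₀ < 0`. The face of `K + C`
on which `g` is maximal is `K' + (C ∩ ker g)`, where `K'` is the compact face of `K` on which `g`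
is maximal, and `C ∩ ker g` spans a strictly smaller space than `C`; induct on that dimension.
-/

open scoped Pointwise

open Set Module Submodule

section Cone

variable {V : Type*} [AddCommGroup V] [Module ℝ V] {C K : Set V}

theorem extremePoints_add_cone_subset (hC0 : (0 : V) ∈ C)
    (hCcone : ∀ c ∈ C, ∀ r : ℝ, 0 ≤ r → r • c ∈ C) :
    (K + C).extremePoints ℝ ⊆ K.extremePoints ℝ := by
  intro e he
  obtain ⟨x, hx, c, hc, rfl⟩ := mem_add.1 (extremePoints_subset he)
  have hKC : K ⊆ K + C := fun y hy => ⟨y, hy, 0, hC0, add_zero y⟩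
  have hmid : x + c ∈ openSegment ℝ x (x + (2 : ℝ) • c) :=
    ⟨1 / 2, 1 / 2, by norm_num, by norm_num, by norm_num, by module⟩
  have hx_eq : x = x + c := he.2 (hKC hx) ⟨x, hx, _, hCcone c hc 2 (by norm_num), rfl⟩ hmid
  obtain rfl : c = 0 := by simpa using hx_eq.symm
  rw [add_zero] at he ⊢
  exact inter_extremePoints_subset_extremePoints_of_subset hKC ⟨hx, he⟩

variable [TopologicalSpace V]

theorem isExposed_add_cone_of_isMaxOn {g : V →L[ℝ] ℝ} {a : V} (hC0 : (0 : V) ∈ C)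
    (hgC : ∀ c ∈ C, g c ≤ 0) (haK : a ∈ K) (ha : IsMaxOn g K a) :
    IsExposed ℝ (K + C) ({x ∈ K | g x = g a} + (C ∩ g ⁻¹' {0})) := by
  refine fun _ => ⟨g, Subset.antisymm ?_ ?_⟩
  · rintro _ ⟨x, ⟨hx, hgx⟩, c, ⟨hc, hgc⟩, rfl⟩
    refine ⟨⟨x, hx, c, hc, rfl⟩, ?_⟩
    rintro _ ⟨y, hy, d, hd, rfl⟩
    have hgc0 : g c = 0 := hgc
    simp only [map_add, hgc0, hgx, add_zero]
    linarith [isMaxOn_iff.1 ha y hy, hgC d hd]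
  · rintro _ ⟨⟨x, hx, c, hc, rfl⟩, hmax⟩
    have hle := hmax a ⟨a, haK, 0, hC0, add_zero a⟩
    have hgx : g x ≤ g a := ha hx
    have hgc : g c ≤ 0 := hgC c hc
    rw [map_add] at hle
    exact ⟨x, ⟨hx, by linarith⟩, c, ⟨hc, show g c = 0 by linarith⟩, rfl⟩

variable [IsTopologicalAddGroup V] [ContinuousSMul ℝ V] [LocallyConvexSpace ℝ V]

theorem exists_nonpos_on_cone_of_notMem (hCclosed : IsClosed C) (hCconv : Convex ℝ C)
    (hC0 : (0 : V) ∈ C) (hCcone : ∀ c ∈ C, ∀ r : ℝ, 0 ≤ r → r • c ∈ C) {x : V} (hx : x ∉ C) :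
    ∃ f : V →L[ℝ] ℝ, (∀ c ∈ C, f c ≤ 0) ∧ 0 < f x := by
  obtain ⟨f, u, hfC, hux⟩ := geometric_hahn_banach_closed_point hCconv hCclosed hx
  have hu : 0 < u := by simpa using hfC 0 hC0
  refine ⟨f, fun c hc => ?_, hu.trans hux⟩
  by_contra! hfc
  have := hfC _ (hCcone c hc (u / f c) (div_nonneg hu.le hfc.le))
  rw [map_smul, smul_eq_mul, div_mul_cancel₀ u hfc.ne'] at this
  exact lt_irrefl u this

end Cone

theorem extremePoints_add_cone_nonempty {V : Type*} [NormedAddCommGroup V] [NormedSpace ℝ V]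
    [FiniteDimensional ℝ V] {C K : Set V} (hCclosed : IsClosed C) (hCconv : Convex ℝ C)
    (hC0 : (0 : V) ∈ C) (hCcone : ∀ c ∈ C, ∀ r : ℝ, 0 ≤ r → r • c ∈ C)
    (hCpointed : C ∩ (-C) = {0}) (hK : IsCompact K) (hKne : K.Nonempty) :
    ((K + C).extremePoints ℝ).Nonempty := by
  induction hn : finrank ℝ (span ℝ C) using Nat.strong_induction_on generalizing C K with
  | _ n ih =>
    by_cases hC : C = {0}
    · simpa [hC] using hK.extremePoints_nonempty hKne
    obtain ⟨c₀, hc₀, hc₀ne⟩ : ∃ c₀ ∈ C, c₀ ≠ 0 := by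
      by_contra! h
      exact hC (Subset.antisymm (fun c hc => h c hc) (singleton_subset_iff.2 hC0))
    have hnc₀ : -c₀ ∉ C := fun h => hc₀ne <| by
      have hc₀mem : c₀ ∈ C ∩ -C := ⟨hc₀, by simpa using h⟩
      rwa [hCpointed] at hc₀mem
    obtain ⟨g, hgC, hgc₀⟩ := exists_nonpos_on_cone_of_notMem hCclosed hCconv hC0 hCcone hnc₀
    obtain ⟨a, haK, ha⟩ := hK.exists_isMaxOn hKne g.continuous.continuousOn
    set C' := C ∩ g ⁻¹' {0}
    have hC'sub : C' ⊆ C := inter_subset_left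
    have hC'0 : (0 : V) ∈ C' := ⟨hC0, map_zero g⟩
    have hC'closed : IsClosed C' := hCclosed.inter (isClosed_singleton.preimage g.continuous)
    have hC'conv : Convex ℝ C' :=
      hCconv.inter ((convex_singleton 0).linear_preimage (g : V →ₗ[ℝ] ℝ))
    have hC'cone : ∀ c ∈ C', ∀ r : ℝ, 0 ≤ r → r • c ∈ C' := fun c hc r hr =>
      ⟨hCcone c hc.1 r hr, by simp [show g c = 0 from hc.2]⟩
    have hC'pointed : C' ∩ -C' = {0} :=
      Subset.antisymm (hCpointed ▸ inter_subset_inter hC'sub (neg_subset_neg.2 hC'sub))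
        (singleton_subset_iff.2 ⟨hC'0, by simpa using hC'0⟩)
    have hrank : finrank ℝ (span ℝ C') < n := by
      have hker : span ℝ C' ≤ LinearMap.ker (g : V →ₗ[ℝ] ℝ) := span_le.2 inter_subset_right
      refine hn ▸ finrank_lt_finrank_of_lt (SetLike.lt_iff_le_and_exists.2
        ⟨span_mono hC'sub, c₀, subset_span hc₀, fun h => ?_⟩)
      have : g c₀ = 0 := hker h
      simp [this] at hgc₀
    obtain ⟨e, he⟩ := ih _ hrank hC'closed hC'conv hC'0 hC'cone hC'pointed
      (hK.inter_right (isClosed_singleton.preimage g.continuous)) ⟨a, haK, rfl⟩ rfl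
    exact ⟨e, (isExposed_add_cone_of_isMaxOn hC0 hgC haK ha).isExtreme
      |>.extremePoints_subset_extremePoints he⟩

theorem range_apply_eq_range_apply_of_apply_eq {R V Γ : Type*} [Semiring R] [AddCommMonoid V]
    [Module R V] [Group Γ] (ρ : Γ →* (V ≃ₗ[R] V)) {μ μ' : V} {σ τ : Γ} (h : ρ σ μ = ρ τ μ') :
    (Set.range fun σ : Γ => ρ σ μ) = (Set.range fun σ : Γ => ρ σ μ') := by
  let := MulAction.compHom V ρ
  have horbit : ∀ ν : V, (Set.range fun σ : Γ => ρ σ ν) = MulAction.orbit Γ ν := fun _ => rfl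
  rw [horbit, horbit, ← MulAction.orbit_smul σ μ, ← MulAction.orbit_smul τ μ']
  exact congrArg _ h

/-- Let `V` be a finite-dimensional real inner product space and
`C ⊆ V` a pointed closed convex cone (`C ∩ (−C) = {0}`).  Let `Γ` be a finite group
acting on `V` by linear automorphisms via `ρ : Γ →* (V ≃ₗ[ℝ] V)`.  If
`convexHull ℝ (Γμ + C) = convexHull ℝ (Γμ′ + C)` then `Γμ = Γμ′`, i.e. `μ` and `μ′`
lie in the same `Γ`-orbit. -/
theorem stmt5 {V : Type*} [NormedAddCommGroup V] [InnerProductSpace ℝ V]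
    [FiniteDimensional ℝ V]
    (C : Set V) (hCclosed : IsClosed C) (hCconv : Convex ℝ C) (hC0 : (0 : V) ∈ C)
    (hCcone : ∀ c ∈ C, ∀ r : ℝ, 0 ≤ r → r • c ∈ C)
    (hCpointed : C ∩ (-C) = {0})
    {Γ : Type*} [Group Γ] [Finite Γ] (ρ : Γ →* (V ≃ₗ[ℝ] V))
    (μ μ' : V)
    (hconv : convexHull ℝ ((Set.range fun σ : Γ => ρ σ μ) + C) =
      convexHull ℝ ((Set.range fun σ : Γ => ρ σ μ') + C)) :
    (Set.range fun σ : Γ => ρ σ μ) = (Set.range fun σ : Γ => ρ σ μ') := by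
  have hhull (S : Set V) : convexHull ℝ (S + C) = convexHull ℝ S + C := by
    rw [convexHull_add, hCconv.convexHull_eq]
  have hmem (S : Set V) {e : V} (he : e ∈ (convexHull ℝ S + C).extremePoints ℝ) : e ∈ S :=
    extremePoints_convexHull_subset (extremePoints_add_cone_subset hC0 hCcone he)
  obtain ⟨e, he⟩ := extremePoints_add_cone_nonempty hCclosed hCconv hC0 hCcone hCpointed
    ((finite_range fun σ : Γ => ρ σ μ).isCompact_convexHull ℝ) (range_nonempty _).convexHull
  obtain ⟨σ, hσ⟩ := hmem _ he
  rw [← hhull, hconv, hhull] at he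
  obtain ⟨τ, hτ⟩ := hmem _ he
  exact range_apply_eq_range_apply_of_apply_eq ρ (hσ.trans hτ.symm)
end

section
/- Let A be a group, Q ≤ A a subgroup, P a normal subgroup of Q, Γ ≤ Q a subgroup, K ≤ A a subgroup, and c ∈ A. Set H = Q ∩ cKc⁻¹, a subgroup of Q, and note that PH = {pη : p ∈ P, η ∈ H} is a subgroup of Q since P is normal in Q. Let X be a set with a left Γ-action. Consider the action of (Γ ∩ PH) × H on the set X × PH by (γ, η)·(x, α) = (γ·x, γαη⁻¹), and the action of Γ × K on the set X × ΓPcK (where ΓPcK = {γpck : γ ∈ Γ, p ∈ P, k ∈ K} ⊆ A) by (γ, k)·(x, s) = (γ·x, γsk⁻¹). Then the assignment (x, α) ↦ (x, αc) descends to a well-defined bijection from the orbit space of X × PH under (Γ ∩ PH) × H onto the orbit space of X × ΓPcK under Γ × K. -/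
/-- `H = Q ∩ cKc⁻¹`, as a subset of the ambient group. -/
def Hset {A : Type*} [Group A] (Q K : Subgroup A) (c : A) : Set A :=
  {a | a ∈ Q ∧ ∃ k ∈ K, a = c * k * c⁻¹}

/-- `PH = {p·η : p ∈ P, η ∈ H}`. -/
def PHset {A : Type*} [Group A] (P Q K : Subgroup A) (c : A) : Set A :=
  {a | ∃ p ∈ P, ∃ η ∈ Hset Q K c, a = p * η}

/-- `ΓPcK = {γ·p·c·k : γ ∈ Γ, p ∈ P, k ∈ K}`. -/
def GammaPcKset {A : Type*} [Group A] (Γ P K : Subgroup A) (c : A) : Set A :=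
  {s | ∃ γ ∈ Γ, ∃ p ∈ P, ∃ k ∈ K, s = γ * p * c * k}

/-- The orbit relation of the action of `(Γ ∩ PH) × H` on `X × PH`, given by
`(γ, η) · (x, α) = (γ·x, γαη⁻¹)`. -/
def relPH {A : Type*} [Group A] (P Q Γ K : Subgroup A) (c : A)
    {X : Type*} [MulAction Γ X] :
    (X × ↥(PHset P Q K c)) → (X × ↥(PHset P Q K c)) → Prop :=
  fun w w' => ∃ γ : Γ, (γ : A) ∈ PHset P Q K c ∧ ∃ η ∈ Hset Q K c,
    w'.1 = γ • w.1 ∧ (w'.2 : A) = (γ : A) * (w.2 : A) * η⁻¹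

/-- The orbit relation of the action of `Γ × K` on `X × ΓPcK`, given by
`(γ, k) · (x, s) = (γ·x, γsk⁻¹)`. -/
def relGammaPcK {A : Type*} [Group A] (P Γ K : Subgroup A) (c : A)
    {X : Type*} [MulAction Γ X] :
    (X × ↥(GammaPcKset Γ P K c)) → (X × ↥(GammaPcKset Γ P K c)) → Prop :=
  fun w w' => ∃ γ : Γ, ∃ k ∈ K,
    w'.1 = γ • w.1 ∧ (w'.2 : A) = (γ : A) * (w.2 : A) * k⁻¹

/-!
Right multiplication by `c` maps `PH` into `ΓPcK`, and every `Γ × K`-orbit meets its image, since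
`(x, γpck) ~ (γ⁻¹x, pc)`. If `(x, αc)` and `(x', α'c)` are related by `(γ, k)`, then
`α' = γα(ckc⁻¹)⁻¹`; as `α, α', γ ∈ Q`, the element `η = ckc⁻¹` lies in `H`, and then
`γ = α'ηα⁻¹ ∈ PH`, so `(x, α)` and `(x', α')` are already related by `(γ, η)`.
-/

theorem Quot.map_bijective {α β : Type*} {r : α → α → Prop} {s : β → β → Prop}
    (hs : Equivalence s) (f : α → β) (hf : ∀ ⦃a b⦄, r a b → s (f a) (f b))
    (hf_rev : ∀ ⦃a b⦄, s (f a) (f b) → r a b) (hf_surj : ∀ b, ∃ a, s (f a) b) :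
    Function.Bijective (Quot.map f hf) := by
  constructor
  · rintro ⟨a⟩ ⟨b⟩ (h : Quot.mk s (f a) = Quot.mk s (f b))
    exact Quot.sound (hf_rev (hs.eqvGen_iff.mp (Quot.eqvGen_exact h)))
  · rintro ⟨b⟩
    obtain ⟨a, ha⟩ := hf_surj b
    exact ⟨Quot.mk _ a, Quot.sound ha⟩

theorem Subgroup.le_normalizer_of_conj_mem {A : Type*} [Group A] {P Q : Subgroup A}
    (hPnormal : ∀ q ∈ Q, ∀ p ∈ P, q * p * q⁻¹ ∈ P) : Q ≤ Subgroup.normalizer (P : Set A) := by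
  refine fun q hq => Subgroup.mem_normalizer_iff.mpr fun p => ⟨hPnormal q hq p, fun hp => ?_⟩
  simpa [mul_assoc] using hPnormal q⁻¹ (inv_mem hq) _ hp

section DoubleCoset

variable {A : Type*} [Group A] {P Q Γ K : Subgroup A} {c : A}

def Hsubgroup (Q K : Subgroup A) (c : A) : Subgroup A :=
  Q ⊓ K.map (MulAut.conj c).toMonoidHom

lemma coe_Hsubgroup : (Hsubgroup Q K c : Set A) = Hset Q K c := by
  ext a
  simp [Hsubgroup, Hset, eq_comm]

lemma Hsubgroup_le : Hsubgroup Q K c ≤ Q := inf_le_left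

lemma mem_PHset_iff (hPnormal : ∀ q ∈ Q, ∀ p ∈ P, q * p * q⁻¹ ∈ P) {a : A} :
    a ∈ PHset P Q K c ↔ a ∈ P ⊔ Hsubgroup Q K c := by
  rw [← SetLike.mem_coe, Subgroup.coe_mul_of_right_le_normalizer_left _ _
    (Hsubgroup_le.trans (Subgroup.le_normalizer_of_conj_mem hPnormal)), coe_Hsubgroup]
  simp [PHset, Set.mem_mul, eq_comm]

lemma mul_mem_GammaPcKset {α : A} (hα : α ∈ PHset P Q K c) :
    α * c ∈ GammaPcKset Γ P K c := by
  obtain ⟨p, hp, η, ⟨-, k, hk, rfl⟩, rfl⟩ := hα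
  exact ⟨1, one_mem Γ, p, hp, k, hk, by group⟩

variable {X : Type*} [MulAction Γ X]

lemma relGammaPcK_equivalence : Equivalence (relGammaPcK P Γ K c (X := X)) where
  refl _ := ⟨1, 1, one_mem K, by simp, by simp⟩
  symm := by
    rintro w w' ⟨γ, k, hk, hx, hs⟩
    refine ⟨γ⁻¹, k⁻¹, inv_mem hk, by rw [hx, inv_smul_smul], ?_⟩
    rw [hs]; push_cast; group
  trans := by
    rintro w w' w'' ⟨γ, k, hk, hx, hs⟩ ⟨γ', k', hk', hx', hs'⟩
    refine ⟨γ' * γ, k' * k, mul_mem hk' hk, by rw [hx', hx, smul_smul], ?_⟩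
    rw [hs', hs]; push_cast; group

def mulRightPH (w : X × PHset P Q K c) : X × GammaPcKset Γ P K c :=
  (w.1, ⟨w.2 * c, mul_mem_GammaPcKset w.2.2⟩)

lemma relGammaPcK_mulRightPH {w w' : X × PHset P Q K c} (h : relPH P Q Γ K c w w') :
    relGammaPcK P Γ K c (mulRightPH w) (mulRightPH w') := by
  obtain ⟨γ, -, η, ⟨-, k, hk, rfl⟩, hx, hα⟩ := h
  refine ⟨γ, k, hk, hx, ?_⟩
  simp only [mulRightPH, hα]
  group

lemma relPH_of_relGammaPcK_mulRightPH (hPQ : P ≤ Q)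
    (hPnormal : ∀ q ∈ Q, ∀ p ∈ P, q * p * q⁻¹ ∈ P) (hΓQ : Γ ≤ Q)
    {w w' : X × PHset P Q K c}
    (h : relGammaPcK P Γ K c (mulRightPH w) (mulRightPH w')) : relPH P Q Γ K c w w' := by
  obtain ⟨γ, k, hk, hx, hs⟩ := h
  have hPH_le : P ⊔ Hsubgroup Q K c ≤ Q := sup_le hPQ Hsubgroup_le
  have hα := (mem_PHset_iff hPnormal).mp w.2.2
  have hα' := (mem_PHset_iff hPnormal).mp w'.2.2
  have hα'_eq : (w'.2 : A) = γ * w.2 * (c * k * c⁻¹)⁻¹ := by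
    simp only [mulRightPH] at hs
    rw [← mul_inv_cancel_right (w'.2 : A) c, hs]
    group
  have hη : c * k * c⁻¹ ∈ Hset Q K c := by
    refine ⟨?_, k, hk, rfl⟩
    have : c * k * c⁻¹ = (w'.2 : A)⁻¹ * γ * w.2 := by rw [hα'_eq]; group
    rw [this]
    exact mul_mem (mul_mem (inv_mem (hPH_le hα')) (hΓQ γ.2)) (hPH_le hα)
  have hγ : (γ : A) ∈ PHset P Q K c := by
    have : (γ : A) = w'.2 * (c * k * c⁻¹) * (w.2 : A)⁻¹ := by rw [hα'_eq]; group
    rw [this, mem_PHset_iff hPnormal]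
    refine mul_mem (mul_mem hα' (Subgroup.mem_sup_right ?_)) (inv_mem hα)
    rwa [← SetLike.mem_coe, coe_Hsubgroup]
  exact ⟨γ, hγ, _, hη, hx, hα'_eq⟩

lemma exists_relGammaPcK_mulRightPH (s : X × GammaPcKset Γ P K c) :
    ∃ w : X × PHset P Q K c, relGammaPcK P Γ K c (mulRightPH w) s := by
  obtain ⟨γ, hγ, p, hp, k, hk, hs⟩ := s.2.2
  have hpPH : p ∈ PHset P Q K c := ⟨p, hp, 1, ⟨one_mem Q, 1, one_mem K, by group⟩, by group⟩
  refine ⟨((⟨γ, hγ⟩ : Γ)⁻¹ • s.1, ⟨p, hpPH⟩), ⟨γ, hγ⟩, k⁻¹, inv_mem hk, ?_, ?_⟩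
  · exact (smul_inv_smul _ _).symm
  · simp only [mulRightPH, hs, inv_inv]
    group

end DoubleCoset

/-- Let `A` be a group, `Q ≤ A`, `P` normal in `Q`, `Γ ≤ Q`,
`K ≤ A`, `c ∈ A`, and `H = Q ∩ cKc⁻¹`.  Let `X` carry a left `Γ`-action.  Then
`(x, α) ↦ (x, αc)` descends to a well-defined bijection from the orbit space of
`X × PH` under `(Γ ∩ PH) × H` onto the orbit space of `X × ΓPcK` under `Γ × K`. -/
theorem stmt6 {A : Type*} [Group A] (P Q Γ K : Subgroup A)
    (hPQ : P ≤ Q) (hPnormal : ∀ q ∈ Q, ∀ p ∈ P, q * p * q⁻¹ ∈ P) (hΓQ : Γ ≤ Q)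
    (c : A) {X : Type*} [MulAction Γ X] :
    ∃ e : Quot (relPH P Q Γ K c (X := X)) ≃ Quot (relGammaPcK P Γ K c (X := X)),
      ∀ (x : X) (α : A) (hα : α ∈ PHset P Q K c) (hαc : α * c ∈ GammaPcKset Γ P K c),
        e (Quot.mk _ (x, ⟨α, hα⟩)) = Quot.mk _ (x, ⟨α * c, hαc⟩) :=
  ⟨Equiv.ofBijective _ (Quot.map_bijective relGammaPcK_equivalence mulRightPH
      (fun _ _ => relGammaPcK_mulRightPH)
      (fun _ _ => relPH_of_relGammaPcK_mulRightPH hPQ hPnormal hΓQ)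
      exists_relGammaPcK_mulRightPH),
    fun _ _ _ _ => rfl⟩
end

section
/- Let F be a field of characteristic zero, g ≥ 1, and V = F^{2g} with standard basis e₁,…,e_{2g}, equipped with the symplectic form ψ determined by: ψ(e_i, e_j) = 1 if i < j and i + j = 2g+1; ψ(e_i, e_j) = −1 if i > j and i + j = 2g+1; and ψ(e_i, e_j) = 0 if i + j ≠ 2g+1. Let GSp(V) be the group of linear automorphisms f of V such that ψ(f x, f y) = λ·ψ(x, y) for some λ ∈ Fˣ. For 0 ≤ m ≤ 2g write W_m = span(e₁,…,e_m). For 0 ≤ k ≤ g let R_k ⊆ GSp(V) be the subgroup of those f with f(e_j) − e_j ∈ W_{j−1} for 1 ≤ j ≤ k, f(e_j) − e_j ∈ W_k for k < j ≤ 2g−k, and f(e_j) − e_j ∈ W_{j−1} for 2g−k < j ≤ 2g. Suppose W ⊆ V is an isotropic subspace (ψ vanishes identically on W × W) of dimension h with f(W) = W for every f ∈ R_k. Then either h < k and W = W_h, or h ≥ k and W_k ⊆ W. -/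
noncomputable section

/-- The standard symplectic form `ψ` on `F^{2g}`, determined (0-indexed) by
`ψ(e_i, e_j) = 1` if `i < j` and `i + j + 1 = 2g`, `ψ(e_i, e_j) = -1` if `i > j`
and `i + j + 1 = 2g`, and `ψ(e_i, e_j) = 0` otherwise. -/
def psi (g : ℕ) (F : Type*) [Field F] (x y : Fin (2*g) → F) : F :=
  ∑ i : Fin (2*g), ∑ j : Fin (2*g),
    x i *
      (if (i : ℕ) + (j : ℕ) + 1 = 2*g then (if (i : ℕ) < (j : ℕ) then (1 : F) else -1) else 0)
      * y j

/-- `W_m = span(e₁, …, e_m)` (the span of the first `m` standard basis vectors). -/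
def Wsub (g m : ℕ) (F : Type*) [Field F] : Submodule F (Fin (2*g) → F) :=
  Submodule.span F {v | ∃ i : Fin (2*g), (i : ℕ) < m ∧ v = Pi.single i 1}

/-- The unipotent subgroup `R_k ⊆ GSp(V)`: symplectic similitudes `f` with
`f(e_j) − e_j ∈ W_{j−1}` for `1 ≤ j ≤ k`, `f(e_j) − e_j ∈ W_k` for `k < j ≤ 2g−k`,
and `f(e_j) − e_j ∈ W_{j−1}` for `2g−k < j ≤ 2g` (1-indexed `j`). -/
def RkSet (g k : ℕ) (F : Type*) [Field F] :
    Set ((Fin (2*g) → F) ≃ₗ[F] (Fin (2*g) → F)) :=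
  {f | (∃ lam : Fˣ, ∀ x y, psi g F (f x) (f y) = (lam : F) * psi g F x y) ∧
    ∀ j : Fin (2*g),
      f (Pi.single j 1) - Pi.single j 1 ∈
        Wsub g (if (j : ℕ) < k then (j : ℕ) else if (j : ℕ) < 2*g - k then k else (j : ℕ)) F}

/-!
Every `1 + N` with `N * N = 0` and `N` skew-adjoint for `ψ` is an isometry of `ψ`; when its
columns also satisfy the flag conditions it lies in `R_k`, so `N w ∈ W` for all `w ∈ W`. Write
`i'` (`Fin.rev i` below) for the index paired with `i` by `ψ`. For `i < k`, the long root element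
`x ↦ x_{i'} e_i` sends `w` to `w_{i'} e_i`, and isotropy gives `0 = ψ(w_{i'} e_i, w) = ± w_{i'}²`,
so `w_{i'} = 0`. For `i < j` the short root element `x ↦ x_j e_i ∓ x_{i'} e_{j'}` then sends `w`
to `w_j e_i`: so `e_i ∈ W` as soon as some vector of `W` has a nonzero coordinate beyond `i`.
If `e_m` is the first of `e_0, …, e_{k-1}` missing from `W`, this squeezes
`W_m ≤ W ≤ W_{m+1}`, whence `W = W_m`; otherwise `W_k ≤ W`.
-/

section Unipotent

variable {R M : Type*} [CommRing R] [AddCommGroup M] [Module R M]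

def unipotentEquiv (N : Module.End R M) (hN : N * N = 0) : M ≃ₗ[R] M :=
  LinearEquiv.ofLinearMap (1 + N) (1 - N)
    (show (1 + N) * (1 - N) = 1 by simp [add_mul, mul_sub, hN])
    (show (1 - N) * (1 + N) = 1 by simp [sub_mul, mul_add, hN])

@[simp] lemma unipotentEquiv_apply (N : Module.End R M) (hN : N * N = 0) (x : M) :
    unipotentEquiv N hN x = x + N x := rfl

lemma LinearMap.IsSkewAdjoint.apply_add_apply_add {B : LinearMap.BilinForm R M}
    {N : Module.End R M} (hskew : LinearMap.IsSkewAdjoint B N) (hN : N * N = 0) (x y : M) :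
    B (x + N x) (y + N y) = B x y := by
  have hNN : B (N x) (N y) = 0 := by
    rw [hskew x (N y), Pi.neg_apply, ← Module.End.mul_apply, hN, LinearMap.zero_apply, neg_zero,
      map_zero]
  have hxy : B (N x) y = -B x (N y) := by rw [hskew x y, Pi.neg_apply, map_neg]
  simp only [map_add, LinearMap.add_apply, hNN, hxy]
  abel

variable {ι : Type*} [DecidableEq ι]

def elemMap (a b : ι) : Module.End R (ι → R) :=
  LinearMap.single R (fun _ => R) a ∘ₗ LinearMap.proj b

@[simp] lemma elemMap_apply (a b : ι) (x : ι → R) : elemMap a b x = Pi.single a (x b) := rfl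

lemma elemMap_mul_elemMap_of_ne {b c : ι} (a d : ι) (h : b ≠ c) :
    elemMap (R := R) a b * elemMap c d = 0 := by
  ext x : 1
  simp [Pi.single_eq_of_ne h]

end Unipotent

section Form

variable {g : ℕ} {F : Type*} [Field F]

variable (g F) in
def psiSign (i : Fin (2*g)) : F := if (i : ℕ) < g then 1 else -1

lemma psiSign_rev (i : Fin (2*g)) : psiSign g F i.rev = -psiSign g F i := by
  have := i.is_lt
  simp only [psiSign, Fin.val_rev]
  split_ifs <;> first | omega | simp

lemma psiSign_mul_self (i : Fin (2*g)) : psiSign g F i * psiSign g F i = 1 := by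
  unfold psiSign; split_ifs <;> simp

lemma psi_eq_sum (x y : Fin (2*g) → F) :
    psi g F x y = ∑ i, x i * psiSign g F i * y i.rev := by
  have hentry : ∀ i j : Fin (2*g),
      (if (i : ℕ) + j + 1 = 2*g then (if (i : ℕ) < j then (1 : F) else -1) else 0) =
        if j = i.rev then psiSign g F i else 0 := by
    intro i j
    simp only [psiSign, Fin.ext_iff, Fin.val_rev]
    split_ifs <;> first | rfl | omega
  simp only [psi, hentry, mul_ite, ite_mul, mul_zero, zero_mul, Finset.sum_ite_eq',
    Finset.mem_univ, if_true]

variable (g F) in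
def psiForm : LinearMap.BilinForm F (Fin (2*g) → F) :=
  Matrix.toBilin' (Matrix.of fun i j : Fin (2*g) =>
    if (i : ℕ) + j + 1 = 2*g then (if (i : ℕ) < j then (1 : F) else -1) else 0)

lemma psiForm_apply (x y : Fin (2*g) → F) : psiForm g F x y = psi g F x y :=
  Matrix.toBilin'_apply _ x y

lemma psiForm_single_left (a : Fin (2*g)) (c : F) (y : Fin (2*g) → F) :
    psiForm g F (Pi.single a c) y = c * psiSign g F a * y a.rev := by
  rw [psiForm_apply, psi_eq_sum, Finset.sum_eq_single a (fun i _ hi => by simp [hi]) (by simp),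
    Pi.single_eq_same]

lemma psiForm_single_right (x : Fin (2*g) → F) (b : Fin (2*g)) (c : F) :
    psiForm g F x (Pi.single b c) = - x b.rev * psiSign g F b * c := by
  rw [psiForm_apply, psi_eq_sum, Finset.sum_eq_single b.rev
    (fun i _ hi => by simp [Fin.rev_ne_iff.mpr hi]) (by simp), Fin.rev_rev, Pi.single_eq_same,
    psiSign_rev]
  ring

lemma Fin.rev_ne_self (i : Fin (2*g)) : i.rev ≠ i := by
  rw [Ne, Fin.ext_iff, Fin.val_rev]; omega

lemma isSkewAdjoint_elemMap_rev (a : Fin (2*g)) :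
    LinearMap.IsSkewAdjoint (psiForm g F) (elemMap a a.rev) := by
  intro x y
  simp only [Pi.neg_apply, elemMap_apply, ← Pi.single_neg, psiForm_single_left,
    psiForm_single_right]
  ring

lemma elemMap_rev_mul_self (a : Fin (2*g)) :
    elemMap (R := F) a a.rev * elemMap a a.rev = 0 :=
  elemMap_mul_elemMap_of_ne _ _ (Fin.rev_ne_self a)

def shortRootMap (a b : Fin (2*g)) : Module.End F (Fin (2*g) → F) :=
  elemMap a b - (psiSign g F a * psiSign g F b) • elemMap b.rev a.rev

lemma isSkewAdjoint_shortRootMap (a b : Fin (2*g)) :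
    LinearMap.IsSkewAdjoint (psiForm g F) (shortRootMap a b) := by
  intro x y
  simp only [shortRootMap, Pi.neg_apply, LinearMap.sub_apply, LinearMap.smul_apply, elemMap_apply,
    map_sub, map_smul, map_neg, smul_eq_mul, psiForm_single_left, psiForm_single_right, Fin.rev_rev,
    psiSign_rev]
  linear_combination (x a.rev * y b - x b * y a.rev) * psiSign g F a * psiSign_mul_self (F := F) b

lemma shortRootMap_mul_self {a b : Fin (2*g)} (hab : a ≠ b) :
    shortRootMap (F := F) a b * shortRootMap a b = 0 := by
  simp only [shortRootMap, sub_mul, mul_sub, smul_mul_assoc, mul_smul_comm,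
    elemMap_mul_elemMap_of_ne _ _ hab.symm, elemMap_mul_elemMap_of_ne _ _ (Fin.rev_ne_self b).symm,
    elemMap_mul_elemMap_of_ne _ _ (Fin.rev_ne_self a),
    elemMap_mul_elemMap_of_ne _ _ (Fin.rev_inj.not.mpr hab), smul_zero, sub_zero]

end Form

section Flag

variable {F : Type*} [Field F] {g : ℕ}

lemma Wsub_eq_span_image (m : ℕ) :
    Wsub g m F = Submodule.span F (Pi.basisFun F (Fin (2*g)) '' {i | (i : ℕ) < m}) := by
  refine congrArg _ (Set.ext fun v => ⟨?_, ?_⟩)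
  · rintro ⟨i, hi, rfl⟩
    exact ⟨i, hi, Pi.basisFun_apply _ _ i⟩
  · rintro ⟨i, hi, rfl⟩
    exact ⟨i, hi, Pi.basisFun_apply _ _ i⟩

lemma mem_Wsub_iff {m : ℕ} {x : Fin (2*g) → F} :
    x ∈ Wsub g m F ↔ ∀ j : Fin (2*g), m ≤ j → x j = 0 := by
  rw [Wsub_eq_span_image, Module.Basis.mem_span_image]
  simp only [Set.subset_def, Finset.mem_coe, Finsupp.mem_support_iff, Pi.basisFun_repr,
    Set.mem_ofPred_eq]
  exact forall_congr' fun j => by rw [← not_imp_not, not_not, not_lt]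

lemma single_mem_Wsub {m : ℕ} {i : Fin (2*g)} (c : F) (hi : (i : ℕ) < m) :
    Pi.single i c ∈ Wsub g m F :=
  mem_Wsub_iff.mpr fun j hj => Pi.single_eq_of_ne (M := fun _ => F) (by rintro rfl; omega) c

lemma finrank_Wsub {m : ℕ} (hm : m ≤ 2*g) : Module.finrank F (Wsub g m F) = m := by
  have hrange : Pi.basisFun F (Fin (2*g)) '' {i | (i : ℕ) < m} =
      Set.range (Pi.basisFun F (Fin (2*g)) ∘ Fin.castLE hm) := by
    rw [Set.range_comp, Fin.range_castLE]
  rw [Wsub_eq_span_image, hrange, finrank_span_eq_card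
    ((Pi.basisFun F _).linearIndependent.comp _ (Fin.castLE_injective hm)), Fintype.card_fin]

lemma eq_Wsub_of_le_of_le {W : Submodule F (Fin (2*g) → F)} {i : Fin (2*g)}
    (hlow : Wsub g i F ≤ W) (hup : W ≤ Wsub g (i + 1) F) (hi : Pi.single i 1 ∉ W) :
    W = Wsub g i F := by
  have hupper := Submodule.finrank_mono hup
  rw [finrank_Wsub (by omega)] at hupper
  have hlower := Submodule.finrank_mono hlow
  rw [finrank_Wsub (by omega)] at hlower
  refine (Submodule.eq_of_le_of_finrank_eq hlow ?_).symm
  rw [finrank_Wsub (by omega)]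
  by_contra hne
  have htop := Submodule.eq_of_le_of_finrank_eq hup (by rw [finrank_Wsub (by omega)]; omega)
  exact hi (htop ▸ single_mem_Wsub 1 (by omega))

lemma exists_eq_Wsub_or_Wsub_le {k : ℕ} {W : Submodule F (Fin (2*g) → F)}
    (hW : ∀ i j : Fin (2*g), (i : ℕ) < k → i < j → ∀ w ∈ W, w j ≠ 0 → Pi.single i 1 ∈ W) :
    (∃ m < k, W = Wsub g m F) ∨ Wsub g k F ≤ W := by
  by_cases hle : Wsub g k F ≤ W
  · exact Or.inr hle
  left
  have hne : {i : Fin (2*g) | (i : ℕ) < k ∧ Pi.single i 1 ∉ W}.Nonempty := by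
    contrapose! hle
    refine Submodule.span_le.mpr ?_
    rintro _ ⟨i, hik, rfl⟩
    by_contra hiW
    exact hle.subset ⟨hik, hiW⟩
  obtain ⟨i, ⟨hik, hiW⟩, hmin⟩ := wellFounded_lt.has_min _ hne
  refine ⟨i, hik, eq_Wsub_of_le_of_le ?_ ?_ hiW⟩
  · refine Submodule.span_le.mpr ?_
    rintro _ ⟨l, hli, rfl⟩
    by_contra hlW
    exact hmin l ⟨by omega, hlW⟩ (by omega)
  · intro w hw
    refine mem_Wsub_iff.mpr fun j hj => ?_
    by_contra hwj
    exact hiW (hW i j hik (by omega) w hw hwj)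

end Flag

section Stabilizer

variable {F : Type*} [Field F] {g k : ℕ}

lemma elemMap_single_mem_Wsub {a b : Fin (2*g)} (hab : a < b) (h : (a : ℕ) < k ∨ 2*g - k ≤ b)
    (j : Fin (2*g)) :
    elemMap a b (Pi.single j (1 : F)) ∈
      Wsub g (if (j : ℕ) < k then (j : ℕ) else if (j : ℕ) < 2*g - k then k else (j : ℕ)) F := by
  rw [elemMap_apply]
  by_cases hj : j = b
  · subst hj
    rw [Pi.single_eq_same]
    exact single_mem_Wsub 1 (by split_ifs <;> omega)
  · rw [Pi.single_eq_of_ne (Ne.symm hj), Pi.single_zero]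
    exact zero_mem _

lemma unipotentEquiv_mem_RkSet {N : Module.End F (Fin (2*g) → F)} (hN : N * N = 0)
    (hskew : LinearMap.IsSkewAdjoint (psiForm g F) N)
    (hcol : ∀ j : Fin (2*g), N (Pi.single j 1) ∈
      Wsub g (if (j : ℕ) < k then (j : ℕ) else if (j : ℕ) < 2*g - k then k else (j : ℕ)) F) :
    unipotentEquiv N hN ∈ RkSet g k F :=
  ⟨⟨1, fun x y => by
      simpa only [unipotentEquiv_apply, psiForm_apply, Units.val_one, one_mul] using
        hskew.apply_add_apply_add hN x y⟩,
    fun j => by simpa using hcol j⟩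

lemma apply_mem_of_map_eq {W : Submodule F (Fin (2*g) → F)}
    (hstab : ∀ f ∈ RkSet g k F, W.map (f : (Fin (2*g) → F) →ₗ[F] (Fin (2*g) → F)) = W)
    {N : Module.End F (Fin (2*g) → F)} (hN : N * N = 0)
    (hskew : LinearMap.IsSkewAdjoint (psiForm g F) N)
    (hcol : ∀ j : Fin (2*g), N (Pi.single j 1) ∈
      Wsub g (if (j : ℕ) < k then (j : ℕ) else if (j : ℕ) < 2*g - k then k else (j : ℕ)) F)
    {w : Fin (2*g) → F} (hw : w ∈ W) : N w ∈ W := by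
  have hfw : unipotentEquiv N hN w ∈ W :=
    hstab _ (unipotentEquiv_mem_RkSet hN hskew hcol) ▸ Submodule.mem_map_of_mem hw
  simpa using W.sub_mem hfw hw

lemma apply_rev_eq_zero (hk : k ≤ g) {W : Submodule F (Fin (2*g) → F)}
    (hiso : ∀ x ∈ W, ∀ y ∈ W, psi g F x y = 0)
    (hstab : ∀ f ∈ RkSet g k F, W.map (f : (Fin (2*g) → F) →ₗ[F] (Fin (2*g) → F)) = W)
    {i : Fin (2*g)} (hi : (i : ℕ) < k) {w : Fin (2*g) → F} (hw : w ∈ W) : w i.rev = 0 := by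
  have hlt : i < i.rev := by rw [Fin.lt_def, Fin.val_rev]; omega
  have hNw := apply_mem_of_map_eq hstab (elemMap_rev_mul_self i) (isSkewAdjoint_elemMap_rev i)
    (elemMap_single_mem_Wsub hlt (Or.inl hi)) hw
  have h0 := hiso _ hNw w hw
  rw [← psiForm_apply, elemMap_apply, psiForm_single_left, mul_right_comm, ← sq] at h0
  have hsign : psiSign g F i ≠ 0 := by unfold psiSign; split_ifs <;> norm_num
  exact pow_eq_zero_iff two_ne_zero |>.mp ((mul_eq_zero.mp h0).resolve_right hsign)

lemma single_mem_of_apply_ne_zero (hk : k ≤ g) {W : Submodule F (Fin (2*g) → F)}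
    (hiso : ∀ x ∈ W, ∀ y ∈ W, psi g F x y = 0)
    (hstab : ∀ f ∈ RkSet g k F, W.map (f : (Fin (2*g) → F) →ₗ[F] (Fin (2*g) → F)) = W)
    {i j : Fin (2*g)} (hi : (i : ℕ) < k) (hij : i < j) {w : Fin (2*g) → F} (hw : w ∈ W)
    (hwj : w j ≠ 0) : Pi.single i 1 ∈ W := by
  have hcol : ∀ l : Fin (2*g), shortRootMap i j (Pi.single l 1) ∈
      Wsub g (if (l : ℕ) < k then (l : ℕ) else if (l : ℕ) < 2*g - k then k else (l : ℕ)) F :=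
    fun l => sub_mem (elemMap_single_mem_Wsub hij (Or.inl hi) l)
      (Submodule.smul_mem _ _ (elemMap_single_mem_Wsub (Fin.rev_lt_rev.mpr hij)
        (Or.inr (by rw [Fin.val_rev]; omega)) l))
  have hNw := apply_mem_of_map_eq hstab (shortRootMap_mul_self hij.ne)
    (isSkewAdjoint_shortRootMap i j) hcol hw
  rw [shortRootMap, LinearMap.sub_apply, LinearMap.smul_apply, elemMap_apply, elemMap_apply,
    apply_rev_eq_zero hk hiso hstab hi hw, Pi.single_zero, smul_zero, sub_zero] at hNw
  simpa [← Pi.single_smul, hwj] using W.smul_mem (w j)⁻¹ hNw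

end Stabilizer

theorem stmt7_general (F : Type*) [Field F] (g k h : ℕ) (hk : k ≤ g)
    (W : Submodule F (Fin (2*g) → F))
    (hiso : ∀ x ∈ W, ∀ y ∈ W, psi g F x y = 0)
    (hdim : Module.finrank F W = h)
    (hstab : ∀ f ∈ RkSet g k F,
      W.map (f : (Fin (2*g) → F) →ₗ[F] (Fin (2*g) → F)) = W) :
    (h < k ∧ W = Wsub g h F) ∨ (k ≤ h ∧ Wsub g k F ≤ W) := by
  rcases exists_eq_Wsub_or_Wsub_le fun i j hi hij w hw hwj =>
      single_mem_of_apply_ne_zero hk hiso hstab hi hij hw hwj with ⟨m, hmk, rfl⟩ | hle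
  · obtain rfl : h = m := by rw [← hdim, finrank_Wsub (by omega)]
    exact Or.inl ⟨hmk, rfl⟩
  · refine Or.inr ⟨?_, hle⟩
    simpa [hdim, finrank_Wsub (show k ≤ 2*g by omega)] using Submodule.finrank_mono hle

/-- Let `F` be a field of characteristic zero, `g ≥ 1`,
`0 ≤ k ≤ g`, and let `W ⊆ F^{2g}` be an isotropic subspace of dimension `h` with
`f(W) = W` for every `f ∈ R_k`.  Then either `h < k` and `W = W_h`, or `h ≥ k`
and `W_k ⊆ W`. -/
theorem stmt7 (F : Type*) [Field F] [CharZero F] (g k h : ℕ) (hg : 1 ≤ g) (hk : k ≤ g)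
    (W : Submodule F (Fin (2*g) → F))
    (hiso : ∀ x ∈ W, ∀ y ∈ W, psi g F x y = 0)
    (hdim : Module.finrank F W = h)
    (hstab : ∀ f ∈ RkSet g k F,
      W.map (f : (Fin (2*g) → F) →ₗ[F] (Fin (2*g) → F)) = W) :
    (h < k ∧ W = Wsub g h F) ∨ (k ≤ h ∧ Wsub g k F ≤ W) :=
  stmt7_general F g k h hk W hiso hdim hstab
end
end
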